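/- arXiv:2006.12561 — 2 statements merged into one kernel-verified Lean document; each statement's English description precedes it below -/
import Mathlib

section
/- Let G be a claw-free graph and let T be a spanning tree of G rooted at a vertex r with the DFS property, i.e., for every edge (u,v) of G, one of u and v is an ancestor of the other in T (with respect to the root r). Then every vertex of T has at most two children in T; that is, T is a binary tree. -/
/-- A graph is claw-free if it has no induced `K_{1,3}`: among any three distinct neighbors
of a vertex, some two are adjacent. -/
def ClawFree {V : Type*} (G : SimpleGraph V) : Prop :=
  ∀ v a b c : V, G.Adj v a → G.Adj v b → G.Adj v c → a ≠ b → a ≠ c → b ≠ c →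
    G.Adj a b ∨ G.Adj a c ∨ G.Adj b c

/-- In a tree `T` rooted at `r`, vertex `u` is an ancestor of `v` if `u` lies on every
path in `T` from `r` to `v` (in a tree there is a unique such path). -/
def IsAncestor {V : Type*} (T : SimpleGraph V) (r u v : V) : Prop :=
  ∀ p : T.Path r v, u ∈ p.val.support

/-!
Two distinct children `a`, `b` of a vertex `v` are incomparable: the root path of `b` runs
through `v` and then straight to `b`, so it cannot pass through `a`, and symmetrically. Three
children of `v` are neighbours of `v` in `G`, so by claw-freeness two of them are adjacent in
`G`, and the DFS property would make one an ancestor of the other.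
-/

section

open SimpleGraph

variable {V : Type*} {T : SimpleGraph V} {r u v a b : V}

lemma IsAncestor.notMem_support_of_ne (hanc : IsAncestor T r v u) (huv : u ≠ v)
    {p : T.Walk r v} (hp : p.IsPath) : u ∉ p.support := by
  classical
  intro hu
  exact Walk.endpoint_notMem_support_takeUntil hp hu huv.symm (hanc ⟨_, hp.takeUntil hu⟩)

lemma not_isAncestor_of_children (hrv : T.Reachable r v)
    (ha : T.Adj v a ∧ IsAncestor T r v a) (hb : T.Adj v b ∧ IsAncestor T r v b) (hab : a ≠ b) :
    ¬ IsAncestor T r a b := by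
  classical
  intro hanc
  obtain ⟨p, hp⟩ := hrv.some.toPath
  have hq : (p.concat hb.1).IsPath := hp.concat (hb.2.notMem_support_of_ne hb.1.ne' hp) hb.1
  have haq : a ∈ (p.concat hb.1).support := hanc ⟨_, hq⟩
  rw [Walk.support_concat, List.mem_append, List.mem_singleton] at haq
  rcases haq with hap | rfl
  · exact ha.2.notMem_support_of_ne ha.1.ne' hp hap
  · exact hab rfl

lemma not_three_children {G : SimpleGraph V} (hcf : ClawFree G) (hle : T ≤ G)
    (hdfs : ∀ u v : V, G.Adj u v → IsAncestor T r u v ∨ IsAncestor T r v u)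
    (hrv : T.Reachable r v) {c : V} (ha : T.Adj v a ∧ IsAncestor T r v a)
    (hb : T.Adj v b ∧ IsAncestor T r v b) (hc : T.Adj v c ∧ IsAncestor T r v c)
    (hab : a ≠ b) (hac : a ≠ c) (hbc : b ≠ c) : False := by
  have incomparable : ∀ {x y : V}, T.Adj v x ∧ IsAncestor T r v x →
      T.Adj v y ∧ IsAncestor T r v y → x ≠ y → ¬ G.Adj x y := fun hx hy hxy hG =>
    (hdfs _ _ hG).elim (not_isAncestor_of_children hrv hx hy hxy)
      (not_isAncestor_of_children hrv hy hx hxy.symm)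
  rcases hcf v a b c (hle ha.1) (hle hb.1) (hle hc.1) hab hac hbc with h | h | h
  · exact incomparable ha hb hab h
  · exact incomparable ha hc hac h
  · exact incomparable hb hc hbc h

end

theorem clawfree_dfs_tree_binary_general
    {V : Type*} (G : SimpleGraph V) (hcf : ClawFree G)
    (T : SimpleGraph V) (hle : T ≤ G) (htree : T.IsTree) (r : V)
    (hdfs : ∀ u v : V, G.Adj u v → IsAncestor T r u v ∨ IsAncestor T r v u) :
    ∀ v : V, {c : V | T.Adj v c ∧ IsAncestor T r v c}.ncard ≤ 2 := by
  intro v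
  by_contra! hlt
  -- `ncard` of an infinite set is `0`, so `2 < ncard` already forces finiteness.
  obtain ⟨a, ha, b, hb, c, hc, hab, hac, hbc⟩ :=
    (Set.two_lt_ncard (Set.finite_of_ncard_pos (by omega))).mp hlt
  exact not_three_children hcf hle hdfs (htree.connected.preconnected r v) ha hb hc hab hac hbc

/-- If `G` is claw-free and `T` is a spanning tree of `G` rooted at `r` with the DFS
property (for every edge of `G`, one endpoint is an ancestor of the other), then every
vertex has at most two children in `T`. -/
theorem clawfree_dfs_tree_binary
    {V : Type*} [Fintype V] (G : SimpleGraph V) (hcf : ClawFree G)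
    (T : SimpleGraph V) (hle : T ≤ G) (htree : T.IsTree) (r : V)
    (hdfs : ∀ u v : V, G.Adj u v → IsAncestor T r u v ∨ IsAncestor T r v u) :
    ∀ v : V, {c : V | T.Adj v c ∧ IsAncestor T r v c}.ncard ≤ 2 :=
  clawfree_dfs_tree_binary_general G hcf T hle htree r hdfs
end

section
/- Let G be a claw-free graph and let T be a spanning tree of G rooted at a vertex r with the DFS property, i.e., for every edge (u,v) of G, one of u and v is an ancestor of the other in T (with respect to the root r). Then every vertex of G is adjacent in G to at most two leaves of T, where a leaf of T is a vertex with no children in T. -/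
/-- A leaf of the tree `T` rooted at `r` is a vertex with no children, i.e. it is not an
ancestor of any of its neighbors. -/
def IsLeaf {V : Type*} (T : SimpleGraph V) (r v : V) : Prop :=
  ∀ c : V, T.Adj v c → ¬ IsAncestor T r v c

open SimpleGraph

section

variable {V : Type*}

theorem ClawFree.ncard_le_two_of_isIndepSet {G : SimpleGraph V} (hcf : ClawFree G) {v : V}
    {s : Set V} (hs : s ⊆ G.neighborSet v) (hind : G.IsIndepSet s) : s.ncard ≤ 2 := by
  by_contra! h
  obtain ⟨a, ha, b, hb, c, hc, hab, hac, hbc⟩ :=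
    (Set.two_lt_ncard (Set.finite_of_ncard_pos (by omega))).1 h
  rcases hcf v a b c (hs ha) (hs hb) (hs hc) hab hac hbc with h | h | h
  · exact hind ha hb hab h
  · exact hind ha hc hac h
  · exact hind hb hc hbc h

/-- If the leaf `a` lay on the path from `r` to some `b ≠ a`, then the successor `c` of `a`
on that path would be a child of `a`: the initial segment up to `c` is the path to `c`. -/
theorem IsLeaf.not_isAncestor {T : SimpleGraph V} (htree : T.IsTree) {r a b : V}
    (hleaf : IsLeaf T r a) (hab : a ≠ b) : ¬ IsAncestor T r a b := by
  intro hanc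
  obtain ⟨w, hw, -⟩ := htree.existsUnique_path r b
  obtain ⟨n, rfl, hn⟩ := Walk.mem_support_iff_exists_getVert.1 (hanc ⟨w, hw⟩)
  have hn : n < w.length := lt_of_le_of_ne hn (by rintro rfl; exact hab w.getVert_length)
  refine hleaf _ (w.adj_getVert_succ hn) fun p => ?_
  have := htree.isAcyclic.subsingleton_path r (w.getVert (n + 1))
  rw [Subsingleton.elim p ⟨w.take (n + 1), hw.take _⟩]
  simpa using (w.take (n + 1)).getVert_mem_support n

theorem isIndepSet_setOf_isLeaf {G T : SimpleGraph V} (htree : T.IsTree) {r : V}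
    (hdfs : ∀ u v : V, G.Adj u v → IsAncestor T r u v ∨ IsAncestor T r v u) :
    G.IsIndepSet {l | IsLeaf T r l} := by
  intro a ha b hb hab hadj
  rcases hdfs a b hadj with h | h
  · exact ha.not_isAncestor htree hab h
  · exact hb.not_isAncestor htree (Ne.symm hab) h

end

theorem clawfree_dfs_tree_two_leaves_general
    {V : Type*} (G : SimpleGraph V) (hcf : ClawFree G)
    (T : SimpleGraph V) (htree : T.IsTree) (r : V)
    (hdfs : ∀ u v : V, G.Adj u v → IsAncestor T r u v ∨ IsAncestor T r v u) :
    ∀ v : V, {l : V | IsLeaf T r l ∧ G.Adj v l}.ncard ≤ 2 := fun _ =>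
  hcf.ncard_le_two_of_isIndepSet (fun _ hl => hl.2)
    ((isIndepSet_setOf_isLeaf htree hdfs).mono fun _ hl => hl.1)

/-- If `G` is claw-free and `T` is a spanning tree of `G` rooted at `r` with the DFS
property (for every edge of `G`, one endpoint is an ancestor of the other), then every
vertex of `G` is adjacent in `G` to at most two leaves of `T`. -/
theorem clawfree_dfs_tree_two_leaves
    {V : Type*} [Fintype V] (G : SimpleGraph V) (hcf : ClawFree G)
    (T : SimpleGraph V) (hle : T ≤ G) (htree : T.IsTree) (r : V)
    (hdfs : ∀ u v : V, G.Adj u v → IsAncestor T r u v ∨ IsAncestor T r v u) :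
    ∀ v : V, {l : V | IsLeaf T r l ∧ G.Adj v l}.ncard ≤ 2 :=
  clawfree_dfs_tree_two_leaves_general G hcf T htree r hdfs
end
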